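/- arXiv:1911.07755 — 9 statements merged into one kernel-verified Lean document; each statement's English description precedes it below -/
import Mathlib

section
/- Let X and Y be nonempty compact metric spaces and let u : X × Y → ℝ be continuous. Let L ≥ 0 satisfy |u(x,y) − u(x',y)| ≤ L·d(x,x') for all x, x' ∈ X and y ∈ Y. Let X_n ⊆ X and Y_m ⊆ Y be nonempty finite subsets, and let d_x ≥ 0 be such that for every x ∈ X there exists x_g ∈ X_n with d(x, x_g) ≤ d_x. Then sup_{x∈X} inf_{y∈Y} u(x,y) ≤ max_{x_g∈X_n} min_{y_g∈Y_m} u(x_g, y_g) + L·d_x. -/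
theorem maximin_le_discretized_maximin
    {X Y : Type*} [MetricSpace X] [MetricSpace Y]
    [Nonempty X] [Nonempty Y] [CompactSpace X] [CompactSpace Y]
    (u : X × Y → ℝ) (hu : Continuous u)
    (L : ℝ) (hL : 0 ≤ L)
    (hLipX : ∀ (x x' : X) (y : Y), |u (x, y) - u (x', y)| ≤ L * dist x x')
    (Xn : Finset X) (hXn : Xn.Nonempty) (Ym : Finset Y) (hYm : Ym.Nonempty)
    (dx : ℝ) (hdx : 0 ≤ dx)
    (hcov : ∀ x : X, ∃ xg ∈ Xn, dist x xg ≤ dx) :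
    (⨆ x : X, ⨅ y : Y, u (x, y)) ≤
      Xn.sup' hXn (fun xg => Ym.inf' hYm (fun yg => u (xg, yg))) + L * dx := by
  have hb : BddBelow (Set.range u) := (isCompact_range hu).bddBelow
  apply ciSup_le
  intro x
  obtain ⟨xg, hxg, hd⟩ := hcov x
  obtain ⟨yg, hyg, hmin⟩ := Ym.exists_mem_eq_inf' hYm (fun y => u (xg, y))
  have h1 : (⨅ y : Y, u (x, y)) ≤ u (x, yg) := by
    apply ciInf_le
    exact hb.mono (by rintro _ ⟨y, rfl⟩; exact ⟨(x, y), rfl⟩)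
  have h2 : u (x, yg) ≤ u (xg, yg) + L * dx := by
    have h := (abs_le.mp (hLipX x xg yg)).2
    nlinarith [mul_le_mul_of_nonneg_left hd hL]
  have h3 : Ym.inf' hYm (fun y => u (xg, y)) ≤
      Xn.sup' hXn (fun xg => Ym.inf' hYm (fun yg => u (xg, yg))) :=
    Finset.le_sup' (fun xg => Ym.inf' hYm (fun yg => u (xg, yg))) hxg
  linarith [hmin ▸ h3]
end

section
/- Let X and Y be nonempty compact metric spaces and let u : X × Y → ℝ be continuous. Let L ≥ 0 satisfy |u(x,y) − u(x,y')| ≤ L·d(y,y') for all x ∈ X and y, y' ∈ Y. Let X_n ⊆ X and Y_m ⊆ Y be nonempty finite subsets, and let d_y ≥ 0 be such that for every y ∈ Y there exists y_g ∈ Y_m with d(y, y_g) ≤ d_y. Then max_{x_g∈X_n} min_{y_g∈Y_m} u(x_g, y_g) ≤ sup_{x∈X} inf_{y∈Y} u(x,y) + L·d_y. -/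
theorem discretized_maximin_le_maximin
    {X Y : Type*} [MetricSpace X] [MetricSpace Y]
    [Nonempty X] [Nonempty Y] [CompactSpace X] [CompactSpace Y]
    (u : X × Y → ℝ) (hu : Continuous u)
    (L : ℝ) (hL : 0 ≤ L)
    (hLipY : ∀ (x : X) (y y' : Y), |u (x, y) - u (x, y')| ≤ L * dist y y')
    (Xn : Finset X) (hXn : Xn.Nonempty) (Ym : Finset Y) (hYm : Ym.Nonempty)
    (dy : ℝ) (hdy : 0 ≤ dy)
    (hcov : ∀ y : Y, ∃ yg ∈ Ym, dist y yg ≤ dy) :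
    Xn.sup' hXn (fun xg => Ym.inf' hYm (fun yg => u (xg, yg))) ≤
      (⨆ x : X, ⨅ y : Y, u (x, y)) + L * dy := by
  obtain ⟨p, -, hpmax⟩ := IsCompact.exists_isMaxOn
    (isCompact_univ : IsCompact (Set.univ : Set (X × Y))) Set.univ_nonempty hu.continuousOn
  obtain ⟨q, -, hqmin⟩ := IsCompact.exists_isMinOn
    (isCompact_univ : IsCompact (Set.univ : Set (X × Y))) Set.univ_nonempty hu.continuousOn
  set f : X → ℝ := fun x => ⨅ y : Y, u (x, y) with hf
  have hbb : ∀ x : X, BddBelow (Set.range fun y : Y => u (x, y)) := by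
    intro x
    exact ⟨u q, by rintro _ ⟨y, rfl⟩; exact hqmin (Set.mem_univ _)⟩
  have hbdd : BddAbove (Set.range f) := by
    refine ⟨u p, ?_⟩
    rintro _ ⟨x, rfl⟩
    have y0 : Y := Classical.arbitrary Y
    calc f x ≤ u (x, y0) := ciInf_le (hbb x) y0
      _ ≤ u p := hpmax (Set.mem_univ _)
  apply Finset.sup'_le
  intro xg hxg
  have hcont : Continuous fun y : Y => u (xg, y) := hu.comp (continuous_const.prodMk continuous_id)
  obtain ⟨ys, -, hys⟩ := IsCompact.exists_isMinOn (isCompact_univ : IsCompact (Set.univ : Set Y))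
    Set.univ_nonempty hcont.continuousOn
  obtain ⟨yg, hygm, hygd⟩ := hcov ys
  have h1 : Ym.inf' hYm (fun yg => u (xg, yg)) ≤ u (xg, yg) := Finset.inf'_le _ hygm
  have h2 : u (xg, yg) ≤ u (xg, ys) + L * dy := by
    have := hLipY xg yg ys
    have habs : u (xg, yg) - u (xg, ys) ≤ L * dist yg ys := (abs_le.mp this).2
    have hd : L * dist yg ys ≤ L * dy := by
      have : dist yg ys ≤ dy := by rw [dist_comm]; exact hygd
      exact mul_le_mul_of_nonneg_left this hL
    linarith
  have h3 : u (xg, ys) = f xg := by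
    refine le_antisymm (le_ciInf fun y => hys (Set.mem_univ y)) (ciInf_le (hbb xg) ys)
  have h4 : f xg ≤ ⨆ x : X, f x := le_ciSup hbdd xg
  calc Ym.inf' hYm (fun yg => u (xg, yg)) ≤ u (xg, ys) + L * dy := h1.trans h2
    _ = f xg + L * dy := by rw [h3]
    _ ≤ (⨆ x : X, f x) + L * dy := by linarith
end

section
/- Let X and Y be nonempty compact metric spaces and let u : X × Y → ℝ be continuous. Let L ≥ 0 satisfy |u(x,y) − u(x',y)| ≤ L·d(x,x') and |u(x,y) − u(x,y')| ≤ L·d(y,y') for all x, x' ∈ X and y, y' ∈ Y. Let X_n ⊆ X and Y_m ⊆ Y be nonempty finite subsets, and let d_x^max, d_y^max ≥ 0 be such that every x ∈ X has some x_g ∈ X_n with d(x,x_g) ≤ d_x^max and every y ∈ Y has some y_g ∈ Y_m with d(y,y_g) ≤ d_y^max. Then |sup_{x∈X} inf_{y∈Y} u(x,y) − max_{x_g∈X_n} min_{y_g∈Y_m} u(x_g,y_g)| ≤ L·max{d_x^max, d_y^max}. -/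
theorem abs_maximin_sub_discretized_maximin_le
    {X Y : Type*} [MetricSpace X] [MetricSpace Y]
    [Nonempty X] [Nonempty Y] [CompactSpace X] [CompactSpace Y]
    (u : X × Y → ℝ) (hu : Continuous u)
    (L : ℝ) (hL : 0 ≤ L)
    (hLipX : ∀ (x x' : X) (y : Y), |u (x, y) - u (x', y)| ≤ L * dist x x')
    (hLipY : ∀ (x : X) (y y' : Y), |u (x, y) - u (x, y')| ≤ L * dist y y')
    (Xn : Finset X) (hXn : Xn.Nonempty) (Ym : Finset Y) (hYm : Ym.Nonempty)
    (dxmax dymax : ℝ) (hdx : 0 ≤ dxmax) (hdy : 0 ≤ dymax)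
    (hcovX : ∀ x : X, ∃ xg ∈ Xn, dist x xg ≤ dxmax)
    (hcovY : ∀ y : Y, ∃ yg ∈ Ym, dist y yg ≤ dymax) :
    |(⨆ x : X, ⨅ y : Y, u (x, y)) -
        Xn.sup' hXn (fun xg => Ym.inf' hYm (fun yg => u (xg, yg)))| ≤
      L * max dxmax dymax := by
  obtain ⟨pmax, -, hpmax'⟩ :=
    isCompact_univ.exists_isMaxOn Set.univ_nonempty hu.continuousOn
  obtain ⟨pmin, -, hpmin'⟩ :=
    isCompact_univ.exists_isMinOn Set.univ_nonempty hu.continuousOn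
  have hpmax : ∀ p, u p ≤ u pmax := fun p => hpmax' (Set.mem_univ p)
  have hpmin : ∀ p, u pmin ≤ u p := fun p => hpmin' (Set.mem_univ p)
  set g : X → ℝ := fun x => ⨅ y, u (x, y) with hg
  have hbddB : ∀ x : X, BddBelow (Set.range fun y => u (x, y)) :=
    fun x => ⟨u pmin, by rintro r ⟨y, rfl⟩; exact hpmin _⟩
  have hgle : ∀ x y, g x ≤ u (x, y) := fun x y => ciInf_le (hbddB x) y
  have hbddA : BddAbove (Set.range g) :=
    ⟨u pmax, by
      rintro r ⟨x, rfl⟩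
      exact le_trans (hgle x (Classical.arbitrary Y)) (hpmax _)⟩
  set D := Xn.sup' hXn fun xg => Ym.inf' hYm fun yg => u (xg, yg) with hD
  have hmaxx : L * dxmax ≤ L * max dxmax dymax :=
    mul_le_mul_of_nonneg_left (le_max_left _ _) hL
  have hmaxy : L * dymax ≤ L * max dxmax dymax :=
    mul_le_mul_of_nonneg_left (le_max_right _ _) hL
  rw [abs_sub_le_iff]
  constructor
  · -- S - D ≤ L * dxmax
    have hS : (⨆ x, g x) ≤ D + L * dxmax := by
      apply ciSup_le
      intro x
      obtain ⟨xg, hxg, hdxg⟩ := hcovX x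
      have h1 : g x - L * dxmax ≤ g xg := by
        apply le_ciInf
        intro y
        have hlip : |u (x, y) - u (xg, y)| ≤ L * dxmax :=
          (hLipX x xg y).trans (mul_le_mul_of_nonneg_left hdxg hL)
        have := abs_le.mp hlip
        have := hgle x y
        linarith
      have h2 : g xg ≤ Ym.inf' hYm fun yg => u (xg, yg) :=
        Finset.le_inf' hYm _ fun yg _ => hgle xg yg
      have h3 : (Ym.inf' hYm fun yg => u (xg, yg)) ≤ D :=
        Finset.le_sup' (fun xg => Ym.inf' hYm fun yg => u (xg, yg)) hxg
      linarith
    linarith [hS.trans (by linarith : D + L * dxmax ≤ D + L * max dxmax dymax)]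
  · -- D - S ≤ L * dymax
    obtain ⟨xg, hxg, hxgD⟩ := Finset.exists_mem_eq_sup' hXn
      (fun xg => Ym.inf' hYm fun yg => u (xg, yg))
    have h1 : D ≤ g xg + L * dymax := by
      rw [hD, hxgD]
      have h2 : (Ym.inf' hYm fun yg => u (xg, yg)) - L * dymax ≤ g xg := by
        apply le_ciInf
        intro y
        obtain ⟨yg, hyg, hdyg⟩ := hcovY y
        have hlip : |u (xg, y) - u (xg, yg)| ≤ L * dymax :=
          (hLipY xg y yg).trans (mul_le_mul_of_nonneg_left hdyg hL)
        have := abs_le.mp hlip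
        have : (Ym.inf' hYm fun yg => u (xg, yg)) ≤ u (xg, yg) :=
          Finset.inf'_le _ hyg
        linarith [abs_le.mp hlip]
      linarith
    have h3 : g xg ≤ ⨆ x, g x := le_ciSup hbddA xg
    linarith
end

section
/- Let u : [0,1] × [0,1] → ℝ be continuous, let L > 0 be such that |u(x,y) − u(x',y)| ≤ L|x − x'| and |u(x,y) − u(x,y')| ≤ L|y − y'| for all x, x', y, y' ∈ [0,1], and let ε > 0. Set h := ⌈L/(2ε)⌉ and let G := {i/h : i = 0, 1, …, h} ⊆ [0,1] be the uniform grid with h intervals. Then |sup_{x∈[0,1]} inf_{y∈[0,1]} u(x,y) − max_{x∈G} min_{y∈G} u(x,y)| ≤ L/(2h) ≤ ε. -/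
/-!
Every point of `[0,1]` lies within `1 / (2h)` of the grid, so for a function that is `L`-Lipschitz
on `[0,1]` the grid minimum exceeds the infimum by at most `c = L / (2h)`, and the supremum exceeds
the grid maximum by at most `c`. Applied to `y ↦ u (x, y)` this gives `F x ≤ M x ≤ F x + c` for
`F x = ⨅ y, u (x, y)` and the grid minimum `M x`. Since `F` is again `L`-Lipschitz, the outer
supremum of `F` is at most `c` above the grid maximum of `F`; as the inner and the outer errors
have opposite signs, they do not add up.
-/

open Set Finset

section FiniteNet

variable {α ι : Type*} {s : Set α} {t : Finset ι} {p : ι → α} {c : ℝ}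

section

variable {f : α → ℝ}

theorem bddBelow_range_of_forall_exists_abs_sub_le
    (hnet : ∀ y ∈ s, ∃ i ∈ t, |f y - f (p i)| ≤ c) :
    BddBelow (range fun y : s => f y) := by
  obtain ⟨m, hm⟩ := (t.image (f ∘ p)).bddBelow
  refine ⟨m - c, ?_⟩
  rintro _ ⟨y, rfl⟩
  obtain ⟨i, hi, hyi⟩ := hnet y y.2
  have : m ≤ f (p i) := hm (mem_image_of_mem (f ∘ p) hi)
  linarith [abs_le.1 hyi]

theorem bddAbove_range_of_forall_exists_abs_sub_le
    (hnet : ∀ y ∈ s, ∃ i ∈ t, |f y - f (p i)| ≤ c) :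
    BddAbove (range fun y : s => f y) := by
  obtain ⟨m, hm⟩ := (t.image (f ∘ p)).bddAbove
  refine ⟨m + c, ?_⟩
  rintro _ ⟨y, rfl⟩
  obtain ⟨i, hi, hyi⟩ := hnet y y.2
  have : f (p i) ≤ m := hm (mem_image_of_mem (f ∘ p) hi)
  linarith [abs_le.1 hyi]

variable (ht : t.Nonempty) (hp : ∀ i ∈ t, p i ∈ s) (hnet : ∀ y ∈ s, ∃ i ∈ t, |f y - f (p i)| ≤ c)
include ht hp hnet

theorem ciInf_le_inf'_comp : ⨅ y : s, f y ≤ t.inf' ht (f ∘ p) :=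
  le_inf' ht _ fun i hi => ciInf_le (bddBelow_range_of_forall_exists_abs_sub_le hnet) ⟨p i, hp i hi⟩

theorem inf'_comp_le_ciInf_add : t.inf' ht (f ∘ p) ≤ (⨅ y : s, f y) + c := by
  have : Nonempty s := ht.elim fun i hi => ⟨⟨p i, hp i hi⟩⟩
  refine le_ciInf_add fun y => ?_
  obtain ⟨i, hi, hyi⟩ := hnet y y.2
  have : t.inf' ht (f ∘ p) ≤ f (p i) := inf'_le (f ∘ p) hi
  linarith [abs_le.1 hyi]

theorem sup'_comp_le_ciSup : t.sup' ht (f ∘ p) ≤ ⨆ y : s, f y :=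
  sup'_le ht _ fun i hi => le_ciSup (bddAbove_range_of_forall_exists_abs_sub_le hnet) ⟨p i, hp i hi⟩

theorem ciSup_le_sup'_comp_add : ⨆ y : s, f y ≤ t.sup' ht (f ∘ p) + c := by
  have : Nonempty s := ht.elim fun i hi => ⟨⟨p i, hp i hi⟩⟩
  refine ciSup_le fun y => ?_
  obtain ⟨i, hi, hyi⟩ := hnet y y.2
  have : f (p i) ≤ t.sup' ht (f ∘ p) := le_sup' (f ∘ p) hi
  linarith [abs_le.1 hyi]

end

theorem abs_ciSup_sub_sup'_le {F : α → ℝ} {M : ι → ℝ} (ht : t.Nonempty)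
    (hp : ∀ i ∈ t, p i ∈ s) (hnet : ∀ x ∈ s, ∃ i ∈ t, |F x - F (p i)| ≤ c)
    (hM : ∀ i ∈ t, F (p i) ≤ M i ∧ M i ≤ F (p i) + c) :
    |(⨆ x : s, F x) - t.sup' ht M| ≤ c := by
  have hFM : t.sup' ht (F ∘ p) ≤ t.sup' ht M := sup'_mono_fun fun i hi => (hM i hi).1
  have hMF : t.sup' ht M ≤ t.sup' ht (F ∘ p) + c :=
    sup'_le ht M fun i hi => by
      have : F (p i) ≤ t.sup' ht (F ∘ p) := le_sup' (F ∘ p) hi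
      linarith [(hM i hi).2]
  have hlow := sup'_comp_le_ciSup ht hp hnet
  have hhigh := ciSup_le_sup'_comp_add ht hp hnet
  rw [abs_sub_le_iff]
  constructor <;> linarith

end FiniteNet

theorem abs_ciInf_sub_ciInf_le {ι : Sort*} [Nonempty ι] {f g : ι → ℝ} {c : ℝ}
    (hf : BddBelow (range f)) (hg : BddBelow (range g)) (hfg : ∀ i, |f i - g i| ≤ c) :
    |(⨅ i, f i) - ⨅ i, g i| ≤ c := by
  rw [abs_sub_le_iff, sub_le_iff_le_add, sub_le_iff_le_add, add_comm c, add_comm c]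
  constructor
  · exact le_ciInf_add fun i => (ciInf_le hf i).trans (by linarith [abs_le.1 (hfg i)])
  · exact le_ciInf_add fun i => (ciInf_le hg i).trans (by linarith [abs_le.1 (hfg i)])

theorem natCast_div_mem_Icc {h i : ℕ} (hi : i ∈ range (h + 1)) : (i : ℝ) / h ∈ Icc (0 : ℝ) 1 := by
  rcases h.eq_zero_or_pos with rfl | hh
  · simp
  refine ⟨by positivity, div_le_one_of_le₀ ?_ h.cast_nonneg⟩
  exact_mod_cast Nat.lt_succ_iff.1 (mem_range.1 hi)

theorem exists_mem_range_abs_sub_natCast_div_le {h : ℕ} (hh : 0 < h) {x : ℝ}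
    (hx : x ∈ Icc (0 : ℝ) 1) : ∃ i ∈ range (h + 1), |x - i / h| ≤ 1 / (2 * h) := by
  have hhR : (0 : ℝ) < h := Nat.cast_pos.2 hh
  have hxh : x * h ≤ h := mul_le_of_le_one_left hhR.le hx.2
  set i := ⌊x * h + 1 / 2⌋₊
  have hi_le : (i : ℝ) ≤ x * h + 1 / 2 := Nat.floor_le (by nlinarith [hx.1])
  have hi_gt : x * h + 1 / 2 < i + 1 := Nat.lt_floor_add_one _
  refine ⟨i, mem_range.2 (by exact_mod_cast (by linarith : (i : ℝ) < h + 1)), ?_⟩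
  have hround : |x * h - i| ≤ 1 / 2 := abs_le.2 ⟨by linarith, by linarith⟩
  calc |x - i / h| = |(x * h - i) / h| := by rw [sub_div, mul_div_cancel_right₀ _ hhR.ne']
    _ = |x * h - i| / h := by rw [abs_div, abs_of_pos hhR]
    _ ≤ 1 / 2 / h := by gcongr
    _ = 1 / (2 * h) := by ring

theorem exists_mem_range_abs_sub_le_of_lipschitz {f : ℝ → ℝ} {L : ℝ} (hL : 0 ≤ L)
    (hf : ∀ x ∈ Icc (0 : ℝ) 1, ∀ x' ∈ Icc (0 : ℝ) 1, |f x - f x'| ≤ L * |x - x'|)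
    {h : ℕ} (hh : 0 < h) :
    ∀ x ∈ Icc (0 : ℝ) 1, ∃ i ∈ range (h + 1), |f x - f (i / h)| ≤ L / (2 * h) := by
  intro x hx
  obtain ⟨i, hi, hxi⟩ := exists_mem_range_abs_sub_natCast_div_le hh hx
  refine ⟨i, hi, (hf x hx _ (natCast_div_mem_Icc hi)).trans ?_⟩
  calc L * |x - i / h| ≤ L * (1 / (2 * h)) := mul_le_mul_of_nonneg_left hxi hL
    _ = L / (2 * h) := by ring

theorem div_two_mul_ceil_div_le {L ε : ℝ} (hL : 0 < L) (hε : 0 < ε) :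
    L / (2 * ⌈L / (2 * ε)⌉₊) ≤ ε := by
  have hceil := (div_le_iff₀ (by positivity)).1 (Nat.le_ceil (L / (2 * ε)))
  have : (0 : ℝ) < ⌈L / (2 * ε)⌉₊ := Nat.cast_pos.2 (Nat.ceil_pos.2 (by positivity))
  rw [div_le_iff₀ (by positivity)]
  linarith

theorem uniform_grid_maximin_approx
    (u : ℝ × ℝ → ℝ)
    (L : ℝ) (hL : 0 < L)
    (hLipX : ∀ x ∈ Set.Icc (0:ℝ) 1, ∀ x' ∈ Set.Icc (0:ℝ) 1, ∀ y ∈ Set.Icc (0:ℝ) 1,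
      |u (x, y) - u (x', y)| ≤ L * |x - x'|)
    (hLipY : ∀ x ∈ Set.Icc (0:ℝ) 1, ∀ y ∈ Set.Icc (0:ℝ) 1, ∀ y' ∈ Set.Icc (0:ℝ) 1,
      |u (x, y) - u (x, y')| ≤ L * |y - y'|)
    (ε : ℝ) (hε : 0 < ε)
    (h : ℕ) (hh : h = ⌈L / (2 * ε)⌉₊) :
    |(⨆ x : Set.Icc (0:ℝ) 1, ⨅ y : Set.Icc (0:ℝ) 1, u (↑x, ↑y)) -
        (Finset.range (h + 1)).sup' (by simp) (fun i =>
          (Finset.range (h + 1)).inf' (by simp) (fun j =>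
            u ((i : ℝ) / (h : ℝ), (j : ℝ) / (h : ℝ))))| ≤ L / (2 * h) ∧
      L / (2 * h) ≤ ε := by
  have hpos : 0 < h := hh ▸ Nat.ceil_pos.2 (by positivity)
  have : Nonempty (Icc (0 : ℝ) 1) := ⟨⟨0, by norm_num⟩⟩
  have hgrid : ∀ i ∈ range (h + 1), (i : ℝ) / h ∈ Icc (0 : ℝ) 1 := fun i => natCast_div_mem_Icc
  have hnetY : ∀ x ∈ Icc (0 : ℝ) 1, ∀ y ∈ Icc (0 : ℝ) 1,
      ∃ j ∈ range (h + 1), |u (x, y) - u (x, j / h)| ≤ L / (2 * h) :=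
    fun x hx => exists_mem_range_abs_sub_le_of_lipschitz hL.le (hLipY x hx) hpos
  have hLipInf : ∀ x ∈ Icc (0 : ℝ) 1, ∀ x' ∈ Icc (0 : ℝ) 1,
      |(⨅ y : Icc (0 : ℝ) 1, u (x, y)) - ⨅ y : Icc (0 : ℝ) 1, u (x', y)| ≤ L * |x - x'| :=
    fun x hx x' hx' => abs_ciInf_sub_ciInf_le
      (bddBelow_range_of_forall_exists_abs_sub_le (hnetY x hx))
      (bddBelow_range_of_forall_exists_abs_sub_le (hnetY x' hx')) fun y => hLipX x hx x' hx' y y.2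
  refine ⟨abs_ciSup_sub_sup'_le _ hgrid
    (exists_mem_range_abs_sub_le_of_lipschitz hL.le hLipInf hpos) fun i hi =>
      ⟨ciInf_le_inf'_comp _ hgrid (hnetY _ (hgrid i hi)),
      inf'_comp_le_ciInf_add _ hgrid (hnetY _ (hgrid i hi))⟩, ?_⟩
  rw [hh]
  exact div_two_mul_ceil_div_le hL hε
end

section
/- Let (Ω, ℱ, 𝒫) be a probability space and U : Ω → (ℝ × ℝ → ℝ). Let a, b, ε > 0 and δ ∈ (0,1) with 4a > δ, and set L := b·√(log(4a/δ)). Suppose E ∈ ℱ satisfies 𝒫(E) ≥ 1 − δ/2 and, for every ω ∈ E, the function U(ω) satisfies |U(ω)(x,y) − U(ω)(x',y)| ≤ L|x − x'| and |U(ω)(x,y) − U(ω)(x,y')| ≤ L|y − y'| for all x, x', y, y' ∈ [0,1]. Set h := ⌈(b/(2ε))·√(log(4a/δ))⌉ and let G := {i/h : i = 0, 1, …, h}. Then for every ω ∈ E, |sup_{x∈[0,1]} inf_{y∈[0,1]} U(ω)(x,y) − max_{x∈G} min_{y∈G} U(ω)(x,y)| ≤ ε; in particular, the event that the maximin value of U(ω)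 over [0,1]² and its discretized maximin value over G × G differ by at most ε contains a measurable set of probability at least 1 − δ/2. -/
open MeasureTheory

theorem probabilistic_grid_maximin_approx
    {Ω : Type*} [MeasurableSpace Ω] (P : Measure Ω) [IsProbabilityMeasure P]
    (U : Ω → ℝ × ℝ → ℝ)
    (a b ε δ : ℝ) (ha : 0 < a) (hb : 0 < b) (hε : 0 < ε)
    (hδ : δ ∈ Set.Ioo (0:ℝ) 1) (haδ : δ < 4 * a)
    (E : Set Ω) (hE : MeasurableSet E)
    (hPE : ENNReal.ofReal (1 - δ / 2) ≤ P E)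
    (hLip : ∀ ω ∈ E,
      (∀ x ∈ Set.Icc (0:ℝ) 1, ∀ x' ∈ Set.Icc (0:ℝ) 1, ∀ y ∈ Set.Icc (0:ℝ) 1,
        |U ω (x, y) - U ω (x', y)| ≤
          b * Real.sqrt (Real.log (4 * a / δ)) * |x - x'|) ∧
      (∀ x ∈ Set.Icc (0:ℝ) 1, ∀ y ∈ Set.Icc (0:ℝ) 1, ∀ y' ∈ Set.Icc (0:ℝ) 1,
        |U ω (x, y) - U ω (x, y')| ≤
          b * Real.sqrt (Real.log (4 * a / δ)) * |y - y'|))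
    (h : ℕ) (hh : h = ⌈b / (2 * ε) * Real.sqrt (Real.log (4 * a / δ))⌉₊) :
    (∀ ω ∈ E,
      |(⨆ x : Set.Icc (0:ℝ) 1, ⨅ y : Set.Icc (0:ℝ) 1, U ω (↑x, ↑y)) -
          (Finset.range (h + 1)).sup' (by simp) (fun i =>
            (Finset.range (h + 1)).inf' (by simp) (fun j =>
              U ω ((i : ℝ) / (h : ℝ), (j : ℝ) / (h : ℝ))))| ≤ ε) ∧
    ∃ A : Set Ω, MeasurableSet A ∧ ENNReal.ofReal (1 - δ / 2) ≤ P A ∧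
      A ⊆ {ω : Ω |
        |(⨆ x : Set.Icc (0:ℝ) 1, ⨅ y : Set.Icc (0:ℝ) 1, U ω (↑x, ↑y)) -
          (Finset.range (h + 1)).sup' (by simp) (fun i =>
            (Finset.range (h + 1)).inf' (by simp) (fun j =>
              U ω ((i : ℝ) / (h : ℝ), (j : ℝ) / (h : ℝ))))| ≤ ε} := by
  have hδ0 : 0 < δ := hδ.1
  -- basic facts about L and h
  set s : ℝ := Real.sqrt (Real.log (4 * a / δ)) with hs
  have hlog : 0 < Real.log (4 * a / δ) :=
    Real.log_pos ((one_lt_div hδ0).2 haδ)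
  have hspos : 0 < s := Real.sqrt_pos.mpr hlog
  set L : ℝ := b * s with hLdef
  have hLpos : 0 < L := mul_pos hb hspos
  have hL0 : 0 ≤ L := hLpos.le
  have hh1 : 1 ≤ h := by
    rw [hh]
    exact Nat.one_le_iff_ne_zero.mpr (by
      intro hc
      have := Nat.ceil_eq_zero.mp hc
      nlinarith [mul_pos (div_pos hb (by linarith : (0:ℝ) < 2 * ε)) hspos])
  have hhR : (0:ℝ) < (h : ℝ) := by exact_mod_cast hh1
  have hceil : b / (2 * ε) * s ≤ (h : ℝ) := by
    rw [hh]; exact Nat.le_ceil _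
  have hstep : L * (1 / (2 * (h : ℝ))) ≤ ε := by
    have h2ε : (0:ℝ) < 2 * ε := by linarith
    have hkey : L ≤ 2 * ε * (h : ℝ) := by
      have h1 := mul_le_mul_of_nonneg_left hceil h2ε.le
      have h2 : 2 * ε * (b / (2 * ε) * s) = L := by
        rw [hLdef]; field_simp
      linarith
    rw [mul_one_div, div_le_iff₀ (by positivity)]
    have heq : ε * (2 * (h:ℝ)) = 2 * ε * (h:ℝ) := by ring
    rw [heq]; exact hkey
  -- grid points lie in [0,1]
  have hmem : ∀ i ∈ Finset.range (h + 1), ((i : ℝ) / (h : ℝ)) ∈ Set.Icc (0:ℝ) 1 := by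
    intro i hi
    have hi' : i ≤ h := Nat.lt_succ_iff.mp (Finset.mem_range.mp hi)
    constructor
    · positivity
    · rw [div_le_one hhR]; exact_mod_cast hi'
  -- nearest grid point
  have hnear : ∀ x ∈ Set.Icc (0:ℝ) 1, ∃ i ∈ Finset.range (h + 1),
      |x - (i : ℝ) / (h : ℝ)| ≤ 1 / (2 * (h : ℝ)) := by
    intro x hx
    set k : ℤ := round (x * h) with hk
    have habs : |x * h - (k : ℝ)| ≤ 1 / 2 := abs_sub_round _
    have hxh0 : 0 ≤ x * h := mul_nonneg hx.1 hhR.le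
    have hxh1 : x * h ≤ h := by nlinarith [hx.2]
    have hk0 : 0 ≤ k := by
      by_contra hc
      push_neg at hc
      have hk1 : k ≤ -1 := by omega
      have hkr : (k : ℝ) ≤ -1 := by exact_mod_cast hk1
      have hab := abs_le.mp habs
      linarith
    have hkh : k ≤ (h : ℤ) := by
      by_contra hc
      push_neg at hc
      have hk1 : (h : ℤ) + 1 ≤ k := hc
      have hkr : (h : ℝ) + 1 ≤ (k : ℝ) := by exact_mod_cast hk1
      have hab := abs_le.mp habs
      linarith
    refine ⟨k.toNat, Finset.mem_range.mpr ?_, ?_⟩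
    · have : k.toNat ≤ h := by omega
      omega
    · have hkt : ((k.toNat : ℕ) : ℝ) = (k : ℝ) := by
        exact_mod_cast Int.toNat_of_nonneg hk0
      rw [hkt]
      have : x - (k : ℝ) / h = (x * h - k) / h := by field_simp
      rw [this, abs_div, abs_of_pos hhR, div_le_div_iff₀ hhR (by positivity)]
      calc |x * h - (k : ℝ)| * (2 * (h:ℝ)) ≤ (1/2) * (2 * (h:ℝ)) := by
            apply mul_le_mul_of_nonneg_right habs (by positivity)
        _ = 1 * (h:ℝ) := by ring
    -- main pointwise claim
  have main : ∀ ω ∈ E,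
      |(⨆ x : Set.Icc (0:ℝ) 1, ⨅ y : Set.Icc (0:ℝ) 1, U ω (↑x, ↑y)) -
          (Finset.range (h + 1)).sup' (by simp) (fun i =>
            (Finset.range (h + 1)).inf' (by simp) (fun j =>
              U ω ((i : ℝ) / (h : ℝ), (j : ℝ) / (h : ℝ))))| ≤ ε := by
    intro ω hω
    obtain ⟨hLx, hLy⟩ := hLip ω hω
    haveI : Nonempty (Set.Icc (0:ℝ) 1) := ⟨⟨0, by norm_num⟩⟩
    have h0mem : (0:ℝ) ∈ Set.Icc (0:ℝ) 1 := by norm_num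
    set u : ℝ × ℝ → ℝ := U ω with hu
    -- boundedness of u(x,·)
    have hbdd : ∀ x ∈ Set.Icc (0:ℝ) 1,
        BddBelow (Set.range fun y : Set.Icc (0:ℝ) 1 => u (x, ↑y)) := by
      intro x hx
      refine ⟨u (x, 0) - L, ?_⟩
      rintro _ ⟨y, rfl⟩
      have := hLy x hx y y.2 0 h0mem
      have hy1 : |(y:ℝ) - 0| ≤ 1 := by
        rw [sub_zero, abs_of_nonneg y.2.1]; exact y.2.2
      have h1 : |u (x, ↑y) - u (x, 0)| ≤ L := by
        calc |u (x, ↑y) - u (x, 0)| ≤ L * |(y:ℝ) - 0| := this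
          _ ≤ L * 1 := by exact mul_le_mul_of_nonneg_left hy1 hL0
          _ = L := mul_one L
      have := (abs_le.mp h1).1
      linarith
    set f : ℝ → ℝ := fun x => ⨅ y : Set.Icc (0:ℝ) 1, u (x, ↑y) with hf
    -- f is Lipschitz-ish: f x ≤ f x' + L * |x - x'|
    have hfL : ∀ x ∈ Set.Icc (0:ℝ) 1, ∀ x' ∈ Set.Icc (0:ℝ) 1,
        f x ≤ f x' + L * |x - x'| := by
      intro x hx x' hx'
      rw [← sub_le_iff_le_add]
      apply le_ciInf
      intro y
      have h1 : f x ≤ u (x, ↑y) := ciInf_le (hbdd x hx) y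
      have h2 : |u (x, ↑y) - u (x', ↑y)| ≤ L * |x - x'| := hLx x hx x' hx' y y.2
      have := (abs_le.mp h2).2
      linarith
    -- grid inf
    set g : ℕ → ℝ := fun i => (Finset.range (h + 1)).inf'
      (by simp) (fun j => u ((i : ℝ) / (h : ℝ), (j : ℝ) / (h : ℝ))) with hg
    have hA : ∀ i ∈ Finset.range (h + 1), f ((i : ℝ) / (h : ℝ)) ≤ g i := by
      intro i hi
      apply Finset.le_inf'
      intro j hj
      exact ciInf_le (hbdd _ (hmem i hi)) ⟨(j : ℝ) / (h : ℝ), hmem j hj⟩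
    have hB : ∀ i ∈ Finset.range (h + 1), g i ≤ f ((i : ℝ) / (h : ℝ)) + ε := by
      intro i hi
      rw [← sub_le_iff_le_add]
      apply le_ciInf
      intro y
      obtain ⟨j, hj, hjd⟩ := hnear (y : ℝ) y.2
      have h1 : g i ≤ u ((i : ℝ) / (h : ℝ), (j : ℝ) / (h : ℝ)) :=
        Finset.inf'_le _ hj
      have h2 : |u ((i : ℝ) / (h : ℝ), (j : ℝ) / (h : ℝ)) - u ((i : ℝ) / (h : ℝ), ↑y)| ≤
          L * |(j : ℝ) / (h : ℝ) - (y : ℝ)| :=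
        hLy _ (hmem i hi) _ (hmem j hj) _ y.2
      have h3 : L * |(j : ℝ) / (h : ℝ) - (y : ℝ)| ≤ ε := by
        rw [abs_sub_comm]
        calc L * |(y : ℝ) - (j : ℝ) / (h : ℝ)| ≤ L * (1 / (2 * (h:ℝ))) :=
              mul_le_mul_of_nonneg_left hjd hL0
          _ ≤ ε := hstep
      have := (abs_le.mp h2).2
      linarith
    -- sup
    set M : ℝ := (Finset.range (h + 1)).sup' (by simp) g with hM
    have hbddf : BddAbove (Set.range fun x : Set.Icc (0:ℝ) 1 => f ↑x) := by
      refine ⟨f 0 + L, ?_⟩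
      rintro _ ⟨x, rfl⟩
      have := hfL x x.2 0 h0mem
      have hx1 : |(x:ℝ) - 0| ≤ 1 := by
        rw [sub_zero, abs_of_nonneg x.2.1]; exact x.2.2
      nlinarith
    set S : ℝ := ⨆ x : Set.Icc (0:ℝ) 1, f ↑x with hS
    have hSM : S ≤ M + ε := by
      apply ciSup_le
      intro x
      obtain ⟨i, hi, hid⟩ := hnear (x : ℝ) x.2
      have h1 : f ↑x ≤ f ((i : ℝ) / (h : ℝ)) + L * |(x:ℝ) - (i : ℝ) / (h : ℝ)| :=
        hfL x x.2 _ (hmem i hi)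
      have h2 : L * |(x:ℝ) - (i : ℝ) / (h : ℝ)| ≤ ε :=
        le_trans (mul_le_mul_of_nonneg_left hid hL0) hstep
      have h3 : g i ≤ M := Finset.le_sup' g hi
      have := hA i hi
      linarith
    have hMS : M ≤ S + ε := by
      apply Finset.sup'_le
      intro i hi
      have h1 : f ((i : ℝ) / (h : ℝ)) ≤ S :=
        le_ciSup hbddf ⟨(i : ℝ) / (h : ℝ), hmem i hi⟩
      have := hB i hi
      linarith
    have : |S - M| ≤ ε := abs_sub_le_iff.mpr ⟨by linarith, by linarith⟩
    convert this using 3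
  exact ⟨main, E, hE, hPE, fun ω hω => main ω hω⟩
end

section
/- Let (Ω, ℱ, 𝒫) be a probability space, let X and Y be nonempty compact metric spaces, and let U : Ω → (X × Y → ℝ) be such that U(ω) is continuous for every ω. Let a, b > 0 and δ ∈ (0,1) with 4a > δ, and set L := b·√(log(4a/δ)). Let X_n ⊆ X and Y_m ⊆ Y be nonempty finite subsets with covering radii d_x^max and d_y^max (i.e., every x ∈ X has some x_g ∈ X_n with d(x,x_g) ≤ d_x^max, and every y ∈ Y has some y_g ∈ Y_m with d(y,y_g) ≤ d_y^max). Suppose E ∈ ℱ satisfies 𝒫(E) ≥ 1 − δ/2 and, for every ω ∈ E, U(ω) is L-Lipschitz in each coordinate. Then for every ω ∈ E, |sup_{x∈X} inf_{y∈Y} U(ω)(x,y) − max_{x_g∈X_n} min_{y_g∈Y_m} U(ω)(x_g,y_g)| ≤ b·√(log(4a/δ))·max{d_x^max, d_y^max}. -/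
open MeasureTheory

theorem probabilistic_discretized_maximin_approx
    {Ω : Type*} [MeasurableSpace Ω] (P : Measure Ω) [IsProbabilityMeasure P]
    {X Y : Type*} [MetricSpace X] [MetricSpace Y]
    [Nonempty X] [Nonempty Y] [CompactSpace X] [CompactSpace Y]
    (U : Ω → X × Y → ℝ) (hU : ∀ ω, Continuous (U ω))
    (a b δ : ℝ) (ha : 0 < a) (hb : 0 < b)
    (hδ : δ ∈ Set.Ioo (0:ℝ) 1) (haδ : δ < 4 * a)
    (Xn : Finset X) (hXn : Xn.Nonempty) (Ym : Finset Y) (hYm : Ym.Nonempty)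
    (dxmax dymax : ℝ)
    (hcovX : ∀ x : X, ∃ xg ∈ Xn, dist x xg ≤ dxmax)
    (hcovY : ∀ y : Y, ∃ yg ∈ Ym, dist y yg ≤ dymax)
    (E : Set Ω) (hE : MeasurableSet E)
    (hPE : ENNReal.ofReal (1 - δ / 2) ≤ P E)
    (hLip : ∀ ω ∈ E,
      (∀ (x x' : X) (y : Y),
        |U ω (x, y) - U ω (x', y)| ≤
          b * Real.sqrt (Real.log (4 * a / δ)) * dist x x') ∧
      (∀ (x : X) (y y' : Y),
        |U ω (x, y) - U ω (x, y')| ≤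
          b * Real.sqrt (Real.log (4 * a / δ)) * dist y y')) :
    ∀ ω ∈ E,
      |(⨆ x : X, ⨅ y : Y, U ω (x, y)) -
          Xn.sup' hXn (fun xg => Ym.inf' hYm (fun yg => U ω (xg, yg)))| ≤
        b * Real.sqrt (Real.log (4 * a / δ)) * max dxmax dymax := by
  intro ω hω
  obtain ⟨hLx, hLy⟩ := hLip ω hω
  set L := b * Real.sqrt (Real.log (4 * a / δ)) with hLdef
  have hL0 : 0 ≤ L := mul_nonneg hb.le (Real.sqrt_nonneg _)
  set f := U ω with hf
  obtain ⟨pmax, -, hmax⟩ := isCompact_univ.exists_isMaxOn Set.univ_nonempty (hU ω).continuousOn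
  obtain ⟨pmin, -, hmin⟩ := isCompact_univ.exists_isMinOn Set.univ_nonempty (hU ω).continuousOn
  have hbd : ∀ x : X, BddBelow (Set.range fun y => f (x, y)) :=
    fun x => ⟨f pmin, by rintro v ⟨y, rfl⟩; exact hmin (Set.mem_univ _)⟩
  have hbdA : BddAbove (Set.range fun x : X => ⨅ y : Y, f (x, y)) := by
    refine ⟨f pmax, ?_⟩
    rintro v ⟨x, rfl⟩
    exact le_trans (ciInf_le (hbd x) (Classical.arbitrary Y)) (hmax (Set.mem_univ _))
  set S := ⨆ x : X, ⨅ y : Y, f (x, y) with hS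
  set D := Xn.sup' hXn fun xg => Ym.inf' hYm fun yg => f (xg, yg) with hD
  have hMx : dxmax ≤ max dxmax dymax := le_max_left _ _
  have hMy : dymax ≤ max dxmax dymax := le_max_right _ _
  have h1 : S ≤ D + L * max dxmax dymax := by
    refine ciSup_le fun x => ?_
    obtain ⟨xg, hxg, hdx⟩ := hcovX x
    obtain ⟨yg, hyg, heq⟩ := Ym.exists_mem_eq_inf' hYm fun yg => f (xg, yg)
    have h2 : (⨅ y : Y, f (x, y)) ≤ f (x, yg) := ciInf_le (hbd x) yg
    have hxx : |f (x, yg) - f (xg, yg)| ≤ L * dxmax :=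
      (hLx x xg yg).trans (mul_le_mul_of_nonneg_left hdx hL0)
    have h3 := (abs_le.mp hxx).2
    have h4 : (Ym.inf' hYm fun yg => f (xg, yg)) ≤ D := Finset.le_sup' (fun xg => Ym.inf' hYm fun yg => f (xg, yg)) hxg
    rw [← heq] at h3
    linarith [mul_le_mul_of_nonneg_left hMx hL0]
  have h2 : D ≤ S + L * max dxmax dymax := by
    obtain ⟨xg, hxg, heq⟩ := Xn.exists_mem_eq_sup' hXn (fun xg => Ym.inf' hYm fun yg => f (xg, yg))
    rw [hD, heq]
    have hinf : (Ym.inf' hYm fun yg => f (xg, yg)) - L * dymax ≤ ⨅ y : Y, f (xg, y) := by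
      refine le_ciInf fun y => ?_
      obtain ⟨yg, hyg, hdy⟩ := hcovY y
      have hxx : |f (xg, y) - f (xg, yg)| ≤ L * dymax :=
        (hLy xg y yg).trans (mul_le_mul_of_nonneg_left hdy hL0)
      have h5 := (abs_le.mp hxx).1
      have hle : (Ym.inf' hYm fun yg => f (xg, yg)) ≤ f (xg, yg) := Finset.inf'_le _ hyg
      linarith
    have hsup : (⨅ y : Y, f (xg, y)) ≤ S := le_ciSup hbdA xg
    linarith [mul_le_mul_of_nonneg_left hMy hL0]
  rw [abs_le]
  constructor <;> linarith
end

section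
/- Let Π be a set, k : Π × Π → ℝ, λ > 0 and σ² > 0. Fix t ∈ ℕ, points π₁, …, π_t ∈ Π and a point π ∈ Π with k(π,π) = σ², and assume that the (t+1)×(t+1) Gram matrix of k at the points (π₁, …, π_t, π) is symmetric and positive semidefinite. Let K_t be the t×t matrix with entries (K_t)_{ij} = k(π_i, π_j), let k_t(π) := (k(π,π₁), …, k(π,π_t))ᵀ, and let N_t(π) := #{i ∈ {1,…,t} : π_i = π}. Then the posterior variance σ_t²(π) := k(π,π) − k_t(π)ᵀ (K_t + λI)^{-1} k_t(π) satisfies σ_t²(π) ≤ λ / (λ/σ² + N_t(π)). -/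
/-!
For `A = K_t + λI`, which is positive definite, `vᵀA⁻¹v = max_w (2 wᵀv - wᵀAw)`. On the
indices with `π_i = π` both `k_t(π)` and the Gram matrix are constant, equal to `σ²`, so testing
with `w` a multiple `c` of the indicator of these `N` indices gives
`σ_t²(π) ≤ σ² - 2cNσ² + c²(N²σ² + λN)`, and the optimal `c = σ²/(λ + Nσ²)` yields the bound.
-/

open Matrix

namespace Matrix

variable {n : Type*} [Fintype n] [DecidableEq n]

section Boole

variable {R : Type*} [NonAssocSemiring R] (S : Finset n)

theorem dotProduct_boole (x : n → R) :
    (fun i => if i ∈ S then 1 else 0) ⬝ᵥ x = ∑ i ∈ S, x i := by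
  simp [dotProduct, ite_mul, Finset.sum_ite_mem]

theorem boole_dotProduct_mulVec_boole (M : Matrix n n R) :
    (fun i => if i ∈ S then 1 else 0) ⬝ᵥ (M *ᵥ fun i => if i ∈ S then 1 else 0) =
      ∑ i ∈ S, ∑ j ∈ S, M i j := by
  simp [mulVec, dotProduct, mul_ite, Finset.sum_ite_mem]

theorem dotProduct_boole_of_forall_mem_eq {x : n → R} {a : R} (hx : ∀ i ∈ S, x i = a) :
    (fun i => if i ∈ S then 1 else 0) ⬝ᵥ x = S.card * a := by
  rw [dotProduct_boole, Finset.sum_congr rfl hx, Finset.sum_const, nsmul_eq_mul]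

theorem boole_dotProduct_mulVec_boole_of_forall_mem_eq {M : Matrix n n R} {a : R}
    (hM : ∀ i ∈ S, ∀ j ∈ S, M i j = a) :
    (fun i => if i ∈ S then 1 else 0) ⬝ᵥ (M *ᵥ fun i => if i ∈ S then 1 else 0) =
      S.card * (S.card * a) := by
  simp only [boole_dotProduct_mulVec_boole, Finset.sum_congr rfl fun i hi =>
    Finset.sum_congr rfl (hM i hi), Finset.sum_const, nsmul_eq_mul]

end Boole

theorem PosDef.two_mul_dotProduct_sub_le_dotProduct_inv_mulVec
    {A : Matrix n n ℝ} (hA : A.PosDef) (v w : n → ℝ) :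
    2 * (w ⬝ᵥ v) - w ⬝ᵥ (A *ᵥ w) ≤ v ⬝ᵥ (A⁻¹ *ᵥ v) := by
  set u := A⁻¹ *ᵥ v
  have hAu : A *ᵥ u = v := by
    rw [mulVec_mulVec, mul_nonsing_inv A (isUnit_iff_ne_zero.mpr hA.det_pos.ne'), one_mulVec]
  have hsymm : Aᵀ = A := by
    simpa [conjTranspose_eq_transpose_of_trivial] using hA.isHermitian.eq
  have hAw : u ⬝ᵥ (A *ᵥ w) = w ⬝ᵥ v := by
    rw [dotProduct_mulVec, ← mulVec_transpose, hsymm, hAu, dotProduct_comm]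
  have hnonneg := hA.posSemidef.dotProduct_mulVec_nonneg (w - u)
  simp only [star_trivial, mulVec_sub, dotProduct_sub, sub_dotProduct, hAu, hAw] at hnonneg
  rw [dotProduct_comm u v] at hnonneg
  linarith

end Matrix

theorem posterior_variance_le_of_repeats
    {α : Type*} (k : α → α → ℝ) (lam s : ℝ) (hlam : 0 < lam) (hs : 0 < s)
    (t : ℕ) (p : Fin t → α) (π : α) (hkπ : k π π = s)
    (hGram : (Matrix.of fun i j : Fin (t + 1) =>
      k ((Fin.snoc p π : Fin (t + 1) → α) i) ((Fin.snoc p π : Fin (t + 1) → α) j)).PosSemidef)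
    (N : ℕ) (hN : N = Nat.card {i : Fin t // p i = π}) :
    k π π - (fun i => k π (p i)) ⬝ᵥ
        (((Matrix.of fun i j : Fin t => k (p i) (p j)) + lam • 1)⁻¹ *ᵥ
          fun i => k π (p i)) ≤
      lam / (lam / s + N) := by
  classical
  set K : Matrix (Fin t) (Fin t) ℝ := of fun i j => k (p i) (p j)
  set S : Finset (Fin t) := {i | p i = π}
  have hp : ∀ i ∈ S, p i = π := fun i hi => (Finset.mem_filter.mp hi).2
  have hS : (S.card : ℝ) = N := by
    simp [hN, S, Nat.card_eq_fintype_card, Fintype.card_subtype]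
  have hK : K.PosSemidef := by
    simpa [submatrix, K] using hGram.submatrix Fin.castSucc
  have hA : (K + lam • 1).PosDef := PosDef.posSemidef_add hK (PosDef.one.smul hlam)
  have hv : ∀ i ∈ S, k π (p i) = s := fun i hi => by rw [hp i hi, hkπ]
  have hKS : ∀ i ∈ S, ∀ j ∈ S, K i j = s := fun i hi j hj => by
    simp only [K, of_apply, hp i hi, hp j hj, hkπ]
  set c := s / (lam + N * s)
  have key := hA.two_mul_dotProduct_sub_le_dotProduct_inv_mulVec (fun i => k π (p i))
    (c • fun i => if i ∈ S then 1 else 0)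
  simp only [add_mulVec, smul_mulVec, one_mulVec, mulVec_smul, dotProduct_add, smul_dotProduct,
    dotProduct_smul, smul_eq_mul, hS,
    dotProduct_boole_of_forall_mem_eq S hv,
    dotProduct_boole_of_forall_mem_eq S fun i hi => if_pos hi,
    boole_dotProduct_mulVec_boole_of_forall_mem_eq S hKS] at key
  have hbound : s - (2 * (c * (N * s)) - (c * (c * (N * (N * s))) + lam * (c * (c * (N * 1)))))
      = lam / (lam / s + N) := by
    simp only [c]; field_simp; ring
  linarith
end

section
/- Let Π be a set, k : Π × Π → ℝ, λ > 0, t ∈ ℕ, and points π₁, …, π_{t+1} ∈ Π and π ∈ Π such that the (t+2)×(t+2) Gram matrix of k at (π₁, …, π_{t+1}, π) is symmetric and positive semidefinite. For s ∈ {t, t+1}, let K_s be the s×s matrix with entries k(π_i,π_j) for i,j ≤ s and let k_s(π) := (k(π,π₁),…,k(π,π_s))ᵀ. Then the posterior variance is nonincreasing in the number of observations: k(π,π) − k_{t+1}(π)ᵀ(K_{t+1} + λI)^{-1}k_{t+1}(π) ≤ k(π,π) − k_t(π)ᵀ(K_t + λI)^{-1}k_t(π). -/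
/-!
For positive definite `M`, `x ⬝ᵥ M⁻¹ x = max_y (2 x ⬝ᵥ y - y ⬝ᵥ M y)`, attained at `y = M⁻¹ x`.
The posterior variance subtracts this quantity for `M = K_s + λ I`, and the problem for the
first `t` points is the same maximisation restricted to vectors `y` supported on those points;
a maximum over fewer vectors is smaller, so the subtracted term grows with `s`.
-/

open Matrix

namespace Matrix.PosDef

variable {m n : Type*} [Fintype m] [Fintype n] [DecidableEq m] [DecidableEq n]
  {M : Matrix n n ℝ}

theorem two_mul_dotProduct_sub_le_dotProduct_inv_mulVec_s8 (hM : M.PosDef) (x y : n → ℝ) :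
    2 * (x ⬝ᵥ y) - y ⬝ᵥ (M *ᵥ y) ≤ x ⬝ᵥ (M⁻¹ *ᵥ x) := by
  set w := M⁻¹ *ᵥ x
  have hMw : M *ᵥ w = x := by
    rw [mulVec_mulVec, mul_nonsing_inv _ ((isUnit_iff_isUnit_det M).mp hM.isUnit), one_mulVec]
  have hdev : 0 ≤ (y - w) ⬝ᵥ (M *ᵥ (y - w)) := hM.posSemidef.dotProduct_mulVec_nonneg _
  have hsymm : w ⬝ᵥ (M *ᵥ y) = x ⬝ᵥ y := by
    rw [dotProduct_mulVec, ← mulVec_transpose, (isHermitian_iff_isSymm.mp hM.isHermitian).eq, hMw]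
  simp only [mulVec_sub, dotProduct_sub, sub_dotProduct, hMw, hsymm] at hdev
  linarith [dotProduct_comm x y, dotProduct_comm x w]

theorem dotProduct_inv_mulVec_conj_le (hM : M.PosDef) (E : Matrix n m ℝ) (x : n → ℝ) :
    (Eᵀ *ᵥ x) ⬝ᵥ ((Eᵀ * M * E)⁻¹ *ᵥ (Eᵀ *ᵥ x)) ≤ x ⬝ᵥ (M⁻¹ *ᵥ x) := by
  set N := Eᵀ * M * E
  by_cases hN : IsUnit N.det
  · set w := N⁻¹ *ᵥ (Eᵀ *ᵥ x)
    have hNw : N *ᵥ w = Eᵀ *ᵥ x := by rw [mulVec_mulVec, mul_nonsing_inv _ hN, one_mulVec]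
    have hlin : x ⬝ᵥ (E *ᵥ w) = (Eᵀ *ᵥ x) ⬝ᵥ w := by
      rw [dotProduct_mulVec, ← mulVec_transpose, dotProduct_comm]
    have hquad : (E *ᵥ w) ⬝ᵥ (M *ᵥ (E *ᵥ w)) = (Eᵀ *ᵥ x) ⬝ᵥ w :=
      calc (E *ᵥ w) ⬝ᵥ (M *ᵥ (E *ᵥ w)) = w ⬝ᵥ (Eᵀ *ᵥ (M *ᵥ (E *ᵥ w))) := by
            rw [dotProduct_mulVec w Eᵀ, vecMul_transpose]
        _ = w ⬝ᵥ (N *ᵥ w) := by simp only [N, mulVec_mulVec, Matrix.mul_assoc]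
        _ = (Eᵀ *ᵥ x) ⬝ᵥ w := by rw [hNw, dotProduct_comm]
    calc (Eᵀ *ᵥ x) ⬝ᵥ w = 2 * (x ⬝ᵥ (E *ᵥ w)) - (E *ᵥ w) ⬝ᵥ (M *ᵥ (E *ᵥ w)) := by
          rw [hlin, hquad]; ring
      _ ≤ x ⬝ᵥ (M⁻¹ *ᵥ x) := hM.two_mul_dotProduct_sub_le_dotProduct_inv_mulVec_s8 _ _
  -- a singular compression has junk inverse `0`
  · rw [nonsing_inv_apply_not_isUnit _ hN, zero_mulVec, dotProduct_zero]
    exact hM.inv.posSemidef.dotProduct_mulVec_nonneg x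

theorem dotProduct_submatrix_inv_mulVec_le (hM : M.PosDef) (e : m → n) (x : n → ℝ) :
    (x ∘ e) ⬝ᵥ ((M.submatrix e e)⁻¹ *ᵥ (x ∘ e)) ≤ x ⬝ᵥ (M⁻¹ *ᵥ x) := by
  set E : Matrix n m ℝ := (1 : Matrix n n ℝ).submatrix id e
  have hconj : Eᵀ * M * E = M.submatrix e e := by
    ext i j; simp [E, mul_apply, one_apply]
  have hrestrict : Eᵀ *ᵥ x = x ∘ e := by
    ext i; simp [E, mulVec, dotProduct, one_apply]
  simpa only [hconj, hrestrict] using hM.dotProduct_inv_mulVec_conj_le E x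

end Matrix.PosDef

theorem posterior_variance_antitone
    {α : Type*} (k : α → α → ℝ) (lam : ℝ) (hlam : 0 < lam)
    (t : ℕ) (p : Fin (t + 1) → α) (π : α)
    (hGram : (Matrix.of fun i j : Fin (t + 2) =>
      k ((Fin.snoc p π : Fin (t + 2) → α) i)
        ((Fin.snoc p π : Fin (t + 2) → α) j)).PosSemidef) :
    k π π - (fun i : Fin (t + 1) => k π (p i)) ⬝ᵥ
        (((Matrix.of fun i j : Fin (t + 1) => k (p i) (p j)) + lam • 1)⁻¹ *ᵥ
          fun i => k π (p i)) ≤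
      k π π - (fun i : Fin t => k π (p i.castSucc)) ⬝ᵥ
        (((Matrix.of fun i j : Fin t => k (p i.castSucc) (p j.castSucc)) + lam • 1)⁻¹ *ᵥ
          fun i => k π (p i.castSucc)) := by
  set K : Matrix (Fin (t + 1)) (Fin (t + 1)) ℝ := Matrix.of fun i j => k (p i) (p j)
  have hK : K.PosSemidef := by
    convert hGram.submatrix Fin.castSucc using 1
    ext i j; simp [K]
  have hKlam : (K + lam • 1).PosDef := PosDef.posSemidef_add hK (PosDef.one.smul hlam)
  have hsub : (K + lam • 1).submatrix Fin.castSucc Fin.castSucc =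
      (Matrix.of fun i j : Fin t => k (p i.castSucc) (p j.castSucc)) + lam • 1 := by
    ext i j; simp [K, one_apply]
  have hrestrict := hKlam.dotProduct_submatrix_inv_mulVec_le Fin.castSucc fun i => k π (p i)
  rw [hsub] at hrestrict
  exact sub_le_sub_left hrestrict _
end

section
/- Let Π be a set, k : Π × Π → ℝ a symmetric kernel (k(π,π') = k(π',π) for all π, π'), λ > 0, t ≥ 1, points π₁, …, π_t ∈ Π whose t×t Gram matrix is symmetric positive semidefinite, and observed values ũ₁, …, ũ_t ∈ ℝ. For s ∈ {t−1, t} and π, π' ∈ Π define μ_s(π) := k_s(π)ᵀ(K_s + λI)^{-1}(ũ₁,…,ũ_s)ᵀ, k_s(π,π') := k(π,π') − k_s(π)ᵀ(K_s + λI)^{-1}k_s(π'), and σ_s²(π) := k_s(π,π), where K_s is the s×s Gram matrix of (π₁,…,π_s) and k_s(π) := (k(π,π₁),…,k(π,π_s))ᵀ. Then λ + σ²_{t−1}(π_t) > 0 and, for every π ∈ Π, μ_t(π) = μ_{t−1}(π) + (k_{t−1}(π, π_t)/(λ + σ²_{t−1}(π_t)))·(ũ_t − μ_{t−1}(π_t)).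 -/
open Matrix

/-- The Gram (kernel) matrix of the points `p` under the kernel `k`. -/
noncomputable def gramMatrix {α : Type*} (k : α → α → ℝ) {t : ℕ} (p : Fin t → α) :
    Matrix (Fin t) (Fin t) ℝ :=
  Matrix.of fun i j => k (p i) (p j)

/-- The GP posterior mean `μ_t(π) = k_t(π)ᵀ (K_t + λI)⁻¹ ũ` after observing values `v`
at the points `p`, with noise parameter `lam`. -/
noncomputable def postMean {α : Type*} (k : α → α → ℝ) (lam : ℝ) {t : ℕ}
    (p : Fin t → α) (v : Fin t → ℝ) (π : α) : ℝ :=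
  (fun i => k π (p i)) ⬝ᵥ ((gramMatrix k p + lam • 1)⁻¹ *ᵥ v)

/-- The GP posterior covariance
`k_t(π,π') = k(π,π') − k_t(π)ᵀ (K_t + λI)⁻¹ k_t(π')` after observing the points `p`,
with noise parameter `lam`. -/
noncomputable def postCov {α : Type*} (k : α → α → ℝ) (lam : ℝ) {t : ℕ}
    (p : Fin t → α) (π π' : α) : ℝ :=
  k π π' - (fun i => k π (p i)) ⬝ᵥ ((gramMatrix k p + lam • 1)⁻¹ *ᵥ fun i => k π' (p i))

/-!
Appending `π_t` borders `K_{t-1} + λI` by one row and one column. Eliminating the last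
coordinate (a Schur complement) gives, with `B = K_{t-1} + λI`, `b = k_{t-1}(π_t)` and `x', y'`
the first `t - 1` coordinates,
`xᵀ (K_t + λI)⁻¹ y = x'ᵀ B⁻¹ y' + (x_t - x'ᵀ B⁻¹ b) (y_t - bᵀ B⁻¹ y') / s`,
where `s = k(π_t, π_t) + λ - bᵀ B⁻¹ b = λ + σ²_{t-1}(π_t)` is positive because `K_t + λI` is
positive definite. Taking `x = k_t(π)` and `y = ũ` is the update.
-/

namespace Matrix

theorem mulVec_inv_mulVec {m R : Type*} [Fintype m] [DecidableEq m] [CommRing R]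
    {A : Matrix m m R} (hA : IsUnit A.det) (w : m → R) : A *ᵥ (A⁻¹ *ᵥ w) = w := by
  rw [mulVec_mulVec, mul_nonsing_inv _ hA, one_mulVec]

section CommRing

variable {R : Type*} [CommRing R] {n : ℕ}

theorem dotProduct_eq_init_add_last (x y : Fin (n + 1) → R) :
    x ⬝ᵥ y = Fin.init x ⬝ᵥ Fin.init y + x (Fin.last n) * y (Fin.last n) :=
  Fin.sum_univ_castSucc _

theorem init_mulVec (M : Matrix (Fin (n + 1)) (Fin (n + 1)) R) (y : Fin (n + 1) → R) :
    Fin.init (M *ᵥ y) = M.submatrix Fin.castSucc Fin.castSucc *ᵥ Fin.init y +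
      y (Fin.last n) • Fin.init (Mᵀ (Fin.last n)) := by
  ext i
  rw [Fin.init, mulVec, dotProduct_eq_init_add_last, mul_comm]
  rfl

theorem mulVec_last (M : Matrix (Fin (n + 1)) (Fin (n + 1)) R) (y : Fin (n + 1) → R) :
    (M *ᵥ y) (Fin.last n) =
      Fin.init (M (Fin.last n)) ⬝ᵥ Fin.init y + M (Fin.last n) (Fin.last n) * y (Fin.last n) :=
  dotProduct_eq_init_add_last _ _

end CommRing

section Field

variable {K : Type*} [Field K] {n : ℕ}

noncomputable def lastSchurComplement (M : Matrix (Fin (n + 1)) (Fin (n + 1)) K) : K :=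
  M (Fin.last n) (Fin.last n) - Fin.init (M (Fin.last n)) ⬝ᵥ
    ((M.submatrix Fin.castSucc Fin.castSucc)⁻¹ *ᵥ Fin.init (Mᵀ (Fin.last n)))

theorem inv_mulVec_eq_snoc (M : Matrix (Fin (n + 1)) (Fin (n + 1)) K) (hM : IsUnit M.det)
    (hA : IsUnit (M.submatrix Fin.castSucc Fin.castSucc).det) (y : Fin (n + 1) → K) {β : K}
    (hβ : β * M.lastSchurComplement = y (Fin.last n) - Fin.init (M (Fin.last n)) ⬝ᵥ
      ((M.submatrix Fin.castSucc Fin.castSucc)⁻¹ *ᵥ Fin.init y)) :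
    M⁻¹ *ᵥ y = (Fin.snoc ((M.submatrix Fin.castSucc Fin.castSucc)⁻¹ *ᵥ Fin.init y -
      β • ((M.submatrix Fin.castSucc Fin.castSucc)⁻¹ *ᵥ Fin.init (Mᵀ (Fin.last n)))) β :
        Fin (n + 1) → K) := by
  rw [lastSchurComplement] at hβ
  set A := M.submatrix Fin.castSucc Fin.castSucc with hAdef
  set z : Fin (n + 1) → K :=
    Fin.snoc (A⁻¹ *ᵥ Fin.init y - β • (A⁻¹ *ᵥ Fin.init (Mᵀ (Fin.last n)))) β
  have hsolve : M *ᵥ z = y := by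
    rw [← Fin.snoc_init_self (M *ᵥ z), ← Fin.snoc_init_self y, init_mulVec, mulVec_last, ← hAdef]
    simp only [z, Fin.init_snoc, Fin.snoc_last, mulVec_sub, mulVec_smul, mulVec_inv_mulVec hA,
      dotProduct_sub, dotProduct_smul, smul_eq_mul, sub_add_cancel]
    congr 1
    linear_combination hβ
  calc M⁻¹ *ᵥ y = M⁻¹ *ᵥ (M *ᵥ z) := by rw [hsolve]
    _ = z := by rw [mulVec_mulVec, nonsing_inv_mul _ hM, one_mulVec]

theorem dotProduct_inv_mulVec_eq (M : Matrix (Fin (n + 1)) (Fin (n + 1)) K) (hM : IsUnit M.det)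
    (hA : IsUnit (M.submatrix Fin.castSucc Fin.castSucc).det) (hs : M.lastSchurComplement ≠ 0)
    (x y : Fin (n + 1) → K) :
    x ⬝ᵥ (M⁻¹ *ᵥ y) =
      Fin.init x ⬝ᵥ ((M.submatrix Fin.castSucc Fin.castSucc)⁻¹ *ᵥ Fin.init y) +
      (x (Fin.last n) - Fin.init x ⬝ᵥ
          ((M.submatrix Fin.castSucc Fin.castSucc)⁻¹ *ᵥ Fin.init (Mᵀ (Fin.last n)))) /
        M.lastSchurComplement *
        (y (Fin.last n) - Fin.init (M (Fin.last n)) ⬝ᵥ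
          ((M.submatrix Fin.castSucc Fin.castSucc)⁻¹ *ᵥ Fin.init y)) := by
  rw [inv_mulVec_eq_snoc M hM hA y (div_mul_cancel₀ _ hs), dotProduct_eq_init_add_last]
  simp only [Fin.init_snoc, Fin.snoc_last, dotProduct_sub, dotProduct_smul, smul_eq_mul]
  ring

end Field

theorem PosDef.lastSchurComplement_pos {K : Type*} [Field K] [PartialOrder K] [StarRing K]
    [TrivialStar K] {n : ℕ} {M : Matrix (Fin (n + 1)) (Fin (n + 1)) K} (hM : M.PosDef) :
    0 < M.lastSchurComplement := by
  set A := M.submatrix Fin.castSucc Fin.castSucc with hAdef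
  have hA : IsUnit A.det :=
    isUnit_iff_isUnit_det A |>.mp (hM.submatrix (Fin.castSucc_injective n)).isUnit
  set z : Fin (n + 1) → K := Fin.snoc (-(A⁻¹ *ᵥ Fin.init (Mᵀ (Fin.last n)))) 1
  have hz : z ≠ 0 := fun h => by simpa [z] using congrFun h (Fin.last n)
  have hMz : M *ᵥ z = Fin.snoc 0 M.lastSchurComplement := by
    rw [lastSchurComplement, ← Fin.snoc_init_self (M *ᵥ z), init_mulVec, mulVec_last, ← hAdef]
    simp [z, mulVec_neg, mulVec_inv_mulVec hA, sub_eq_neg_add]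
  simpa [hMz, dotProduct_eq_init_add_last, z] using hM.dotProduct_mulVec_pos hz

end Matrix

theorem posterior_mean_recursive_update_general
    {α : Type*} (k : α → α → ℝ)
    (lam : ℝ) (hlam : 0 < lam) (n : ℕ)
    (p : Fin (n + 1) → α) (v : Fin (n + 1) → ℝ)
    (hGram : (gramMatrix k p).PosSemidef) :
    0 < lam + postCov k lam (fun i : Fin n => p i.castSucc)
        (p (Fin.last n)) (p (Fin.last n)) ∧
    ∀ π : α,
      postMean k lam p v π =
        postMean k lam (fun i : Fin n => p i.castSucc) (fun i => v i.castSucc) π +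
        postCov k lam (fun i : Fin n => p i.castSucc) π (p (Fin.last n)) /
            (lam + postCov k lam (fun i : Fin n => p i.castSucc)
              (p (Fin.last n)) (p (Fin.last n))) *
          (v (Fin.last n) -
            postMean k lam (fun i : Fin n => p i.castSucc)
              (fun i => v i.castSucc) (p (Fin.last n))) := by
  set M := gramMatrix k p + lam • 1
  have hM : M.PosDef := PosDef.posSemidef_add hGram (PosDef.one.smul hlam)
  have hMsymm : Mᵀ = M := hM.isHermitian
  have hA : M.submatrix Fin.castSucc Fin.castSucc =
      gramMatrix k (fun i : Fin n => p i.castSucc) + lam • 1 := by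
    ext i j
    simp [M, gramMatrix, one_apply]
  have hrow : Fin.init (M (Fin.last n)) = fun i => k (p (Fin.last n)) (p i.castSucc) := by
    ext i
    simp [M, gramMatrix, Fin.init, one_apply, (Fin.castSucc_lt_last i).ne']
  have hs : lam + postCov k lam (fun i : Fin n => p i.castSucc) (p (Fin.last n)) (p (Fin.last n))
      = M.lastSchurComplement := by
    rw [lastSchurComplement, hMsymm, hA, hrow, postCov]
    simp only [M, gramMatrix, Matrix.add_apply, of_apply, Matrix.smul_apply, one_apply_eq,
      smul_eq_mul, mul_one]
    ring
  refine ⟨hs ▸ hM.lastSchurComplement_pos, fun π => ?_⟩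
  have hMdet : IsUnit M.det := (isUnit_iff_isUnit_det M).mp hM.isUnit
  have hAdet : IsUnit (M.submatrix Fin.castSucc Fin.castSucc).det :=
    (isUnit_iff_isUnit_det _).mp (hM.submatrix (Fin.castSucc_injective n)).isUnit
  rw [hs, postMean, dotProduct_inv_mulVec_eq M hMdet hAdet hM.lastSchurComplement_pos.ne',
    hMsymm, hA, hrow]
  rfl

theorem posterior_mean_recursive_update
    {α : Type*} (k : α → α → ℝ) (hsymm : ∀ π π' : α, k π π' = k π' π)
    (lam : ℝ) (hlam : 0 < lam) (n : ℕ)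
    (p : Fin (n + 1) → α) (v : Fin (n + 1) → ℝ)
    (hGram : (gramMatrix k p).PosSemidef) :
    0 < lam + postCov k lam (fun i : Fin n => p i.castSucc)
        (p (Fin.last n)) (p (Fin.last n)) ∧
    ∀ π : α,
      postMean k lam p v π =
        postMean k lam (fun i : Fin n => p i.castSucc) (fun i => v i.castSucc) π +
        postCov k lam (fun i : Fin n => p i.castSucc) π (p (Fin.last n)) /
            (lam + postCov k lam (fun i : Fin n => p i.castSucc)
              (p (Fin.last n)) (p (Fin.last n))) *
          (v (Fin.last n) -
            postMean k lam (fun i : Fin n => p i.castSucc)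
              (fun i => v i.castSucc) (p (Fin.last n))) :=
  posterior_mean_recursive_update_general k lam hlam n p v hGram
end
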